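/- arXiv:2010.14486 — 2 statements merged into one kernel-verified Lean document; each statement's English description precedes it below -/
import Mathlib

section
/- (Hardy–Poincaré inequality, case (b).) Suppose there exists θ ∈ (1,2) such that the function x ↦ a(x)/x^θ is nondecreasing in a neighborhood of x=0. Then there exists a constant C_H > 0 such that for every function w : (0,1] → ℝ that is locally absolutely continuous on (0,1] and satisfies w(1)=0 and ∫₀¹ a(x) |w'(x)|² dx < +∞, one has ∫₀¹ (a(x)/x²) w(x)² dx ≤ C_H ∫₀¹ a(x) |w'(x)|² dx. -/
open MeasureTheory Set Real
open scoped ENNReal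

/-!
Split `(0, 1)` at the point `δ` below which `a x / x ^ θ` is nondecreasing. On `[δ, 1]` the weight
is bounded above and below, and `w x = -∫_x^1 w'` with Cauchy–Schwarz gives
`w x ^ 2 ≤ (min a)⁻¹ ∫ a w'^2`. On `(0, δ)` write `w x = w δ - ∫_x^δ w'`. The `w δ` term is harmless
because `a x / x ^ 2 ≤ (a δ / δ ^ θ) x ^ (θ - 2)` is integrable at `0` as `θ > 1`. For the other
term, Cauchy–Schwarz with the weight `a t * t ^ (-β)`, `β = (θ - 1) / 2`, together with the
monotonicity gives `(∫_x^δ |w'|) ^ 2 ≤ x ^ (β + 1) / (β a x) * ∫_x^δ a t ^ (-β) w'^2`; multiplying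
by `a x / x ^ 2` and integrating in `x` (Tonelli) leaves `(4 / (θ - 1) ^ 2) ∫_0^δ a w'^2`.
-/

theorem lintegral_mul_sq_le_sq_mul_sq {α : Type*} [MeasurableSpace α] {μ : Measure α}
    {f g : α → ℝ≥0∞} (hf : AEMeasurable f μ) (hg : AEMeasurable g μ) :
    (∫⁻ a, f a * g a ∂μ) ^ 2 ≤ (∫⁻ a, f a ^ 2 ∂μ) * ∫⁻ a, g a ^ 2 ∂μ := by
  have h := ENNReal.lintegral_mul_le_Lp_mul_Lq μ Real.HolderConjugate.two_two hf hg
  simp only [Pi.mul_apply, ENNReal.rpow_two] at h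
  calc (∫⁻ a, f a * g a ∂μ) ^ 2
      ≤ ((∫⁻ a, f a ^ 2 ∂μ) ^ (1 / 2 : ℝ) * (∫⁻ a, g a ^ 2 ∂μ) ^ (1 / 2 : ℝ)) ^ 2 := by gcongr
    _ = (∫⁻ a, f a ^ 2 ∂μ) * ∫⁻ a, g a ^ 2 ∂μ := by
      rw [mul_pow, ← ENNReal.rpow_two, ← ENNReal.rpow_two, ← ENNReal.rpow_mul, ← ENNReal.rpow_mul]
      norm_num

theorem sq_lintegral_enorm_le_of_pos {α : Type*} [MeasurableSpace α] {μ : Measure α}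
    {ρ v : α → ℝ} (hρ : AEMeasurable ρ μ) (hv : AEMeasurable v μ) (hρ_pos : ∀ᵐ a ∂μ, 0 < ρ a) :
    (∫⁻ a, ‖v a‖ₑ ∂μ) ^ 2 ≤
      (∫⁻ a, ENNReal.ofReal (ρ a)⁻¹ ∂μ) * ∫⁻ a, ENNReal.ofReal (ρ a * v a ^ 2) ∂μ := by
  have key := lintegral_mul_sq_le_sq_mul_sq (μ := μ)
    (f := fun a => ENNReal.ofReal (√(ρ a))⁻¹) (g := fun a => ENNReal.ofReal (√(ρ a) * |v a|))
    (hρ.sqrt.inv.ennreal_ofReal) ((hρ.sqrt.mul hv.abs).ennreal_ofReal)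
  convert key using 2
  · refine lintegral_congr_ae (hρ_pos.mono fun a ha => ?_)
    dsimp only
    rw [← ENNReal.ofReal_mul (by positivity), inv_mul_cancel_left₀ (Real.sqrt_pos.2 ha).ne',
      Real.enorm_eq_ofReal_abs]
  · refine lintegral_congr_ae (hρ_pos.mono fun a ha => ?_)
    dsimp only
    rw [← ENNReal.ofReal_pow (by positivity), inv_pow, Real.sq_sqrt ha.le]
  · refine lintegral_congr_ae (hρ_pos.mono fun a ha => ?_)
    dsimp only
    rw [← ENNReal.ofReal_pow (by positivity), mul_pow, Real.sq_sqrt ha.le, sq_abs]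

theorem ENNReal.add_sq_le (a b : ℝ≥0∞) : (a + b) ^ 2 ≤ 2 * (a ^ 2 + b ^ 2) := by
  have := ENNReal.rpow_add_le_mul_rpow_add_rpow a b one_le_two
  norm_num [ENNReal.rpow_two] at this
  exact this

theorem enorm_sub_le_lintegral_enorm_of_hasDerivAt {w v : ℝ → ℝ} {x y : ℝ} (hxy : x ≤ y)
    (hv : AEStronglyMeasurable v (volume.restrict (Ioo x y)))
    (hw : ∀ t ∈ Icc x y, HasDerivAt w (v t) t) :
    ‖w y - w x‖ₑ ≤ ∫⁻ t in Ioo x y, ‖v t‖ₑ := by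
  rcases eq_top_or_lt_top (∫⁻ t in Ioo x y, ‖v t‖ₑ) with h | h
  · simp [h]
  have hint : IntervalIntegrable v volume x y :=
    (intervalIntegrable_iff_integrableOn_Ioo_of_le hxy).2 ⟨hv, hasFiniteIntegral_iff_enorm.2 h⟩
  rw [← intervalIntegral.integral_eq_sub_of_hasDerivAt (by rwa [uIcc_of_le hxy]) hint,
    intervalIntegral.integral_of_le hxy, ← Measure.restrict_congr_set Ioo_ae_eq_Ioc]
  exact enorm_integral_le_lintegral_enorm v

theorem ENNReal.ofReal_mul_sq {c : ℝ} (hc : 0 ≤ c) (r : ℝ) :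
    ENNReal.ofReal (c * r ^ 2) = ENNReal.ofReal c * ‖r‖ₑ ^ 2 := by
  rw [ENNReal.ofReal_mul hc, ← Real.enorm_of_nonneg (sq_nonneg r), enorm_pow]

theorem enorm_sq_le_of_hasDerivAt {w v : ℝ → ℝ} {x y : ℝ} (hxy : x ≤ y)
    (hv : AEStronglyMeasurable v (volume.restrict (Ioo x y)))
    (hw : ∀ t ∈ Icc x y, HasDerivAt w (v t) t) :
    ‖w x‖ₑ ^ 2 ≤ 2 * (‖w y‖ₑ ^ 2 + (∫⁻ t in Ioo x y, ‖v t‖ₑ) ^ 2) := by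
  have h_tri : ‖w x‖ₑ ≤ ‖w y‖ₑ + ∫⁻ t in Ioo x y, ‖v t‖ₑ :=
    calc ‖w x‖ₑ = ‖w y - (w y - w x)‖ₑ := by rw [sub_sub_cancel]
      _ ≤ ‖w y‖ₑ + ‖w y - w x‖ₑ := enorm_sub_le
      _ ≤ ‖w y‖ₑ + ∫⁻ t in Ioo x y, ‖v t‖ₑ := by
        gcongr; exact enorm_sub_le_lintegral_enorm_of_hasDerivAt hxy hv hw
  exact (pow_le_pow_left' h_tri 2).trans (ENNReal.add_sq_le _ _)

theorem lintegral_Ioo_zero_rpow {p y : ℝ} (hp : -1 < p) (hy : 0 ≤ y) :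
    ∫⁻ t in Ioo 0 y, ENNReal.ofReal (t ^ p) = ENNReal.ofReal (y ^ (p + 1) / (p + 1)) := by
  rcases hy.eq_or_lt with rfl | hy
  · simp [Real.zero_rpow (by linarith : p + 1 ≠ 0)]
  rw [← ofReal_integral_eq_lintegral_ofReal ((intervalIntegral.integrableOn_Ioo_rpow_iff hy).2 hp)
      (ae_restrict_of_forall_mem measurableSet_Ioo fun t ht => (rpow_pos_of_pos ht.1 p).le),
    ← integral_Ioc_eq_integral_Ioo, ← intervalIntegral.integral_of_le hy.le,
    integral_rpow (Or.inl hp), Real.zero_rpow (by linarith), sub_zero]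

theorem lintegral_Ioi_rpow {p x : ℝ} (hp : p < -1) (hx : 0 < x) :
    ∫⁻ t in Ioi x, ENNReal.ofReal (t ^ p) = ENNReal.ofReal (-x ^ (p + 1) / (p + 1)) := by
  rw [← ofReal_integral_eq_lintegral_ofReal (integrableOn_Ioi_rpow_of_lt hp hx)
      (ae_restrict_of_forall_mem measurableSet_Ioi fun t ht =>
        (rpow_pos_of_pos (hx.trans ht) p).le),
    integral_Ioi_rpow_of_lt hp hx]

theorem lintegral_Ioo_mul_lintegral_Ioo_swap {f g : ℝ → ℝ≥0∞} (hf : Measurable f)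
    (hg : Measurable g) (a b : ℝ) :
    ∫⁻ x in Ioo a b, f x * ∫⁻ t in Ioo x b, g t =
      ∫⁻ t in Ioo a b, (∫⁻ x in Ioo a t, f x) * g t := by
  set G : ℝ × ℝ → ℝ≥0∞ := {p | p.1 < p.2}.indicator fun p => f p.1 * g p.2
  have hG : Measurable G := ((hf.comp measurable_fst).mul (hg.comp measurable_snd)).indicator
    (measurableSet_lt measurable_fst measurable_snd)
  have h_left : ∀ x ∈ Ioo a b, f x * ∫⁻ t in Ioo x b, g t = ∫⁻ t in Ioo a b, G (x, t) := by
    intro x hx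
    have : (fun t => G (x, t)) = (Ioi x).indicator fun t => f x * g t := by
      ext t; simp [G, indicator_apply]
    rw [this, lintegral_indicator measurableSet_Ioi, Measure.restrict_restrict measurableSet_Ioi,
      Ioi_inter_Ioo, max_eq_left hx.1.le, lintegral_const_mul _ hg]
  have h_right : ∀ t ∈ Ioo a b, (∫⁻ x in Ioo a t, f x) * g t = ∫⁻ x in Ioo a b, G (x, t) := by
    intro t ht
    have : (fun x => G (x, t)) = (Iio t).indicator fun x => f x * g t := by
      ext x; simp [G, indicator_apply]
    rw [this, lintegral_indicator measurableSet_Iio, Measure.restrict_restrict measurableSet_Iio,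
      Iio_inter_Ioo, min_eq_left ht.2.le, lintegral_mul_const _ hf]
  rw [setLIntegral_congr_fun measurableSet_Ioo h_left,
    setLIntegral_congr_fun measurableSet_Ioo h_right]
  exact lintegral_lintegral_swap hG.aemeasurable

section MonotoneWeight

variable {A : ℝ → ℝ} {δ θ : ℝ}

theorem mul_rpow_le_mul_rpow_of_monotoneOn (hmono : MonotoneOn (fun x => A x / x ^ θ) (Ioc 0 δ))
    {x t : ℝ} (hx : 0 < x) (hxt : x ≤ t) (ht : t ≤ δ) : A x * t ^ θ ≤ A t * x ^ θ := by
  have := hmono ⟨hx, hxt.trans ht⟩ ⟨hx.trans_le hxt, ht⟩ hxt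
  rwa [div_le_div_iff₀ (rpow_pos_of_pos hx θ) (rpow_pos_of_pos (hx.trans_le hxt) θ)] at this

variable (hmono : MonotoneOn (fun x => A x / x ^ θ) (Ioc 0 δ)) (hA : ∀ x ∈ Ioc 0 δ, 0 < A x)
include hmono hA

theorem lintegral_Ioo_zero_div_sq_le (hδ : 0 < δ) (hθ : 1 < θ) :
    ∫⁻ x in Ioo 0 δ, ENNReal.ofReal (A x / x ^ 2) ≤ ENNReal.ofReal (A δ / (δ * (θ - 1))) := by
  have hAδ := hA δ ⟨hδ, le_rfl⟩
  calc ∫⁻ x in Ioo 0 δ, ENNReal.ofReal (A x / x ^ 2)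
      ≤ ∫⁻ x in Ioo 0 δ, ENNReal.ofReal (A δ / δ ^ θ) * ENNReal.ofReal (x ^ (θ - 2)) := by
        refine setLIntegral_mono' measurableSet_Ioo fun x hx => ?_
        rw [← ENNReal.ofReal_mul (by positivity)]
        refine ENNReal.ofReal_le_ofReal ?_
        have := mul_rpow_le_mul_rpow_of_monotoneOn hmono hx.1 hx.2.le le_rfl
        rw [rpow_sub hx.1, rpow_two, mul_div_assoc',
          div_le_div_iff_of_pos_right (pow_pos hx.1 2), div_mul_eq_mul_div,
          le_div_iff₀ (rpow_pos_of_pos hδ θ)]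
        exact this
    _ = ENNReal.ofReal (A δ / (δ * (θ - 1))) := by
        rw [lintegral_const_mul' _ _ ENNReal.ofReal_ne_top,
          lintegral_Ioo_zero_rpow (by linarith) hδ.le, ← ENNReal.ofReal_mul (by positivity)]
        congr 1
        rw [show θ - 2 + 1 = θ - 1 by ring, rpow_sub_one hδ.ne']
        field_simp

theorem lintegral_Ioo_inv_mul_rpow_neg_le {β x : ℝ} (hβ : β < θ - 1) (hx : 0 < x) :
    ∫⁻ t in Ioo x δ, ENNReal.ofReal (A t * t ^ (-β))⁻¹ ≤
      ENNReal.ofReal (x ^ (β + 1) / ((θ - 1 - β) * A x)) := by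
  rcases le_or_gt δ x with hxδ | hxδ
  · simp [Ioo_eq_empty_of_le hxδ]
  have hAx := hA x ⟨hx, hxδ.le⟩
  calc ∫⁻ t in Ioo x δ, ENNReal.ofReal (A t * t ^ (-β))⁻¹
      ≤ ∫⁻ t in Ioo x δ, ENNReal.ofReal (x ^ θ / A x) * ENNReal.ofReal (t ^ (β - θ)) := by
        refine setLIntegral_mono' measurableSet_Ioo fun t ht => ?_
        have ht0 : 0 < t := hx.trans ht.1
        have hAt := hA t ⟨ht0, ht.2.le⟩
        rw [← ENNReal.ofReal_mul (by positivity)]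
        refine ENNReal.ofReal_le_ofReal ?_
        calc (A t * t ^ (-β))⁻¹ = t ^ (β - θ) * (t ^ θ / A t) := by
              rw [rpow_sub ht0, rpow_neg ht0.le]; field_simp
          _ ≤ t ^ (β - θ) * (x ^ θ / A x) := by
              refine mul_le_mul_of_nonneg_left ?_ (rpow_pos_of_pos ht0 _).le
              rw [div_le_div_iff₀ hAt hAx]
              linarith [mul_rpow_le_mul_rpow_of_monotoneOn hmono hx ht.1.le ht.2.le]
          _ = x ^ θ / A x * t ^ (β - θ) := mul_comm _ _
    _ ≤ ∫⁻ t in Ioi x, ENNReal.ofReal (x ^ θ / A x) * ENNReal.ofReal (t ^ (β - θ)) :=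
        lintegral_mono_set Ioo_subset_Ioi_self
    _ = ENNReal.ofReal (x ^ (β + 1) / ((θ - 1 - β) * A x)) := by
        rw [lintegral_const_mul' _ _ ENNReal.ofReal_ne_top, lintegral_Ioi_rpow (by linarith) hx,
          ← ENNReal.ofReal_mul (by positivity)]
        congr 1
        have : x ^ θ * x ^ (β - θ + 1) = x ^ (β + 1) := by
          rw [← rpow_add hx]; ring_nf
        rw [← this, show β - θ + 1 = -(θ - 1 - β) by ring]
        field_simp

theorem div_sq_mul_sq_lintegral_enorm_le (hAm : Measurable A) {v : ℝ → ℝ} (hv : Measurable v)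
    {β x : ℝ} (hβ : β < θ - 1) (hx : x ∈ Ioc 0 δ) :
    ENNReal.ofReal (A x / x ^ 2) * (∫⁻ t in Ioo x δ, ‖v t‖ₑ) ^ 2 ≤
      ENNReal.ofReal (θ - 1 - β)⁻¹ * (ENNReal.ofReal (x ^ (β - 1)) *
        ∫⁻ t in Ioo x δ, ENNReal.ofReal (A t * t ^ (-β) * v t ^ 2)) := by
  have hAx := hA x hx
  have hθβ : 0 < θ - 1 - β := by linarith
  have h_cs := sq_lintegral_enorm_le_of_pos (μ := volume.restrict (Ioo x δ))
    (ρ := fun t => A t * t ^ (-β)) (by fun_prop) hv.aemeasurable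
    (ae_restrict_of_forall_mem measurableSet_Ioo fun t ht =>
      mul_pos (hA t ⟨hx.1.trans ht.1, ht.2.le⟩) (rpow_pos_of_pos (hx.1.trans ht.1) _))
  calc ENNReal.ofReal (A x / x ^ 2) * (∫⁻ t in Ioo x δ, ‖v t‖ₑ) ^ 2
      ≤ ENNReal.ofReal (A x / x ^ 2) * (ENNReal.ofReal (x ^ (β + 1) / ((θ - 1 - β) * A x)) *
          ∫⁻ t in Ioo x δ, ENNReal.ofReal (A t * t ^ (-β) * v t ^ 2)) := by
        gcongr
        exact h_cs.trans (by gcongr; exact lintegral_Ioo_inv_mul_rpow_neg_le hmono hA hβ hx.1)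
    _ = _ := by
        rw [← mul_assoc, ← mul_assoc, ← ENNReal.ofReal_mul (by positivity),
          ← ENNReal.ofReal_mul (by positivity)]
        congr 2
        rw [rpow_add hx.1, rpow_sub_one hx.1.ne', rpow_one]
        field_simp

theorem lintegral_div_sq_mul_sq_lintegral_enorm_le (hAm : Measurable A) {v : ℝ → ℝ}
    (hv : Measurable v) (hθ : 1 < θ) :
    ∫⁻ x in Ioo 0 δ, ENNReal.ofReal (A x / x ^ 2) * (∫⁻ t in Ioo x δ, ‖v t‖ₑ) ^ 2 ≤
      ENNReal.ofReal (4 / (θ - 1) ^ 2) * ∫⁻ x in Ioo 0 δ, ENNReal.ofReal (A x * v x ^ 2) := by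
  set β := (θ - 1) / 2 with hβ_def
  have hβ : 0 < β := by linarith
  set H : ℝ → ℝ≥0∞ := fun t => ENNReal.ofReal (A t * t ^ (-β) * v t ^ 2)
  have h_outer : ∀ t ∈ Ioo 0 δ, (∫⁻ x in Ioo 0 t, ENNReal.ofReal (x ^ (β - 1))) * H t =
      ENNReal.ofReal β⁻¹ * ENNReal.ofReal (A t * v t ^ 2) := by
    intro t ht
    rw [lintegral_Ioo_zero_rpow (by linarith) ht.1.le, sub_add_cancel,
      ← ENNReal.ofReal_mul (div_nonneg (rpow_nonneg ht.1.le _) hβ.le),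
      ← ENNReal.ofReal_mul (inv_nonneg.2 hβ.le)]
    congr 1
    have : t ^ β ≠ 0 := (rpow_pos_of_pos ht.1 β).ne'
    rw [rpow_neg ht.1.le]
    field_simp
  calc ∫⁻ x in Ioo 0 δ, ENNReal.ofReal (A x / x ^ 2) * (∫⁻ t in Ioo x δ, ‖v t‖ₑ) ^ 2
      ≤ ∫⁻ x in Ioo 0 δ, ENNReal.ofReal β⁻¹ *
          (ENNReal.ofReal (x ^ (β - 1)) * ∫⁻ t in Ioo x δ, H t) :=
        setLIntegral_mono' measurableSet_Ioo fun x hx => by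
          have := div_sq_mul_sq_lintegral_enorm_le hmono hA hAm hv (β := β) (by linarith)
            ⟨hx.1, hx.2.le⟩
          rwa [show θ - 1 - β = β by linarith] at this
    _ = ENNReal.ofReal β⁻¹ *
          ∫⁻ t in Ioo 0 δ, (∫⁻ x in Ioo 0 t, ENNReal.ofReal (x ^ (β - 1))) * H t := by
        rw [lintegral_const_mul' _ _ ENNReal.ofReal_ne_top,
          lintegral_Ioo_mul_lintegral_Ioo_swap (by fun_prop) (by fun_prop)]
    _ = ENNReal.ofReal (4 / (θ - 1) ^ 2) * ∫⁻ x in Ioo 0 δ, ENNReal.ofReal (A x * v x ^ 2) := by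
        rw [setLIntegral_congr_fun measurableSet_Ioo h_outer,
          lintegral_const_mul' _ _ ENNReal.ofReal_ne_top, ← mul_assoc,
          ← ENNReal.ofReal_mul (by positivity)]
        congr 2
        rw [hβ_def]
        field_simp
        ring

theorem lintegral_Ioo_zero_div_sq_mul_sq_le (hAm : Measurable A) {v w : ℝ → ℝ}
    (hv : Measurable v) (hδ : 0 < δ) (hθ : 1 < θ) (hw : ∀ x ∈ Ioc 0 δ, HasDerivAt w (v x) x) :
    ∫⁻ x in Ioo 0 δ, ENNReal.ofReal (A x / x ^ 2 * w x ^ 2) ≤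
      2 * ‖w δ‖ₑ ^ 2 * ENNReal.ofReal (A δ / (δ * (θ - 1))) +
        ENNReal.ofReal (8 / (θ - 1) ^ 2) * ∫⁻ x in Ioo 0 δ, ENNReal.ofReal (A x * v x ^ 2) := by
  have h_pt : ∀ x ∈ Ioo 0 δ, ENNReal.ofReal (A x / x ^ 2 * w x ^ 2) ≤
      2 * ‖w δ‖ₑ ^ 2 * ENNReal.ofReal (A x / x ^ 2) +
        2 * (ENNReal.ofReal (A x / x ^ 2) * (∫⁻ t in Ioo x δ, ‖v t‖ₑ) ^ 2) := by
    intro x hx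
    rw [ENNReal.ofReal_mul_sq (div_nonneg (hA x ⟨hx.1, hx.2.le⟩).le (sq_nonneg x))]
    calc ENNReal.ofReal (A x / x ^ 2) * ‖w x‖ₑ ^ 2
        ≤ ENNReal.ofReal (A x / x ^ 2) * (2 * (‖w δ‖ₑ ^ 2 + (∫⁻ t in Ioo x δ, ‖v t‖ₑ) ^ 2)) := by
          gcongr
          exact enorm_sq_le_of_hasDerivAt hx.2.le hv.aestronglyMeasurable
            fun t ht => hw t ⟨hx.1.trans_le ht.1, ht.2⟩
      _ = _ := by ring
  calc ∫⁻ x in Ioo 0 δ, ENNReal.ofReal (A x / x ^ 2 * w x ^ 2)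
      ≤ ∫⁻ x in Ioo 0 δ, (2 * ‖w δ‖ₑ ^ 2 * ENNReal.ofReal (A x / x ^ 2) +
          2 * (ENNReal.ofReal (A x / x ^ 2) * (∫⁻ t in Ioo x δ, ‖v t‖ₑ) ^ 2)) :=
        setLIntegral_mono' measurableSet_Ioo h_pt
    _ = 2 * ‖w δ‖ₑ ^ 2 * (∫⁻ x in Ioo 0 δ, ENNReal.ofReal (A x / x ^ 2)) +
          2 * ∫⁻ x in Ioo 0 δ, ENNReal.ofReal (A x / x ^ 2) * (∫⁻ t in Ioo x δ, ‖v t‖ₑ) ^ 2 := by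
        rw [lintegral_add_left (by fun_prop), lintegral_const_mul _ (by fun_prop),
          lintegral_const_mul' _ _ ENNReal.ofNat_ne_top]
    _ ≤ 2 * ‖w δ‖ₑ ^ 2 * ENNReal.ofReal (A δ / (δ * (θ - 1))) +
          2 * (ENNReal.ofReal (4 / (θ - 1) ^ 2) *
            ∫⁻ x in Ioo 0 δ, ENNReal.ofReal (A x * v x ^ 2)) := by
        gcongr
        · exact lintegral_Ioo_zero_div_sq_le hmono hA hδ hθ
        · exact lintegral_div_sq_mul_sq_lintegral_enorm_le hmono hA hAm hv hθ
    _ = _ := by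
        rw [← mul_assoc, ← ENNReal.ofReal_ofNat 2, ← ENNReal.ofReal_mul zero_le_two]
        congr 3
        ring

end MonotoneWeight

section BoundedWeight

variable {A v w : ℝ → ℝ} {m : ℝ} (hAm : Measurable A) (hv : Measurable v) (hm : 0 < m)
include hAm hv hm

theorem enorm_sq_le_of_hasDerivAt_of_eq_zero {x y z : ℝ} (hz : z ∈ Icc x y)
    (hw : ∀ t ∈ Icc x y, HasDerivAt w (v t) t) (hwy : w y = 0) (hA : ∀ t ∈ Ioo x y, m ≤ A t) :
    ‖w z‖ₑ ^ 2 ≤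
      ENNReal.ofReal ((y - x) / m) * ∫⁻ t in Ioo x y, ENNReal.ofReal (A t * v t ^ 2) := by
  have h_sub : Ioo z y ⊆ Ioo x y := Ioo_subset_Ioo_left hz.1
  have h_ftc := enorm_sub_le_lintegral_enorm_of_hasDerivAt hz.2 hv.aestronglyMeasurable
    fun t ht => hw t ⟨hz.1.trans ht.1, ht.2⟩
  rw [hwy, zero_sub, enorm_neg] at h_ftc
  have h_cs := sq_lintegral_enorm_le_of_pos (μ := volume.restrict (Ioo z y)) hAm.aemeasurable
    hv.aemeasurable (ae_restrict_of_forall_mem measurableSet_Ioo fun t ht =>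
      hm.trans_le (hA t (h_sub ht)))
  have h_inv : ∫⁻ t in Ioo z y, ENNReal.ofReal (A t)⁻¹ ≤ ENNReal.ofReal ((y - x) / m) :=
    calc ∫⁻ t in Ioo z y, ENNReal.ofReal (A t)⁻¹ ≤ ∫⁻ t in Ioo x y, ENNReal.ofReal m⁻¹ :=
          (lintegral_mono_set h_sub).trans <| setLIntegral_mono' measurableSet_Ioo fun t ht =>
            ENNReal.ofReal_le_ofReal (inv_anti₀ hm (hA t ht))
      _ = ENNReal.ofReal ((y - x) / m) := by
          rw [setLIntegral_const, Real.volume_Ioo, ← ENNReal.ofReal_mul (inv_nonneg.2 hm.le),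
            inv_mul_eq_div]
  calc ‖w z‖ₑ ^ 2 ≤ (∫⁻ t in Ioo z y, ‖v t‖ₑ) ^ 2 := by gcongr
    _ ≤ _ := h_cs
    _ ≤ _ := by gcongr

theorem lintegral_Ico_div_sq_mul_sq_le {δ M : ℝ} (hδ : 0 < δ) (hmA : ∀ x ∈ Icc δ 1, m ≤ A x)
    (hAM : ∀ x ∈ Icc δ 1, A x ≤ M) (hw : ∀ x ∈ Icc δ 1, HasDerivAt w (v x) x) (hw1 : w 1 = 0) :
    ∫⁻ x in Ico δ 1, ENNReal.ofReal (A x / x ^ 2 * w x ^ 2) ≤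
      ENNReal.ofReal (M / δ ^ 2) * ENNReal.ofReal ((1 - δ) / m) *
        ∫⁻ x in Ioo δ 1, ENNReal.ofReal (A x * v x ^ 2) := by
  calc ∫⁻ x in Ico δ 1, ENNReal.ofReal (A x / x ^ 2 * w x ^ 2)
      ≤ ∫⁻ x in Ico δ 1, ENNReal.ofReal (M / δ ^ 2) * (ENNReal.ofReal ((1 - δ) / m) *
          ∫⁻ t in Ioo δ 1, ENNReal.ofReal (A t * v t ^ 2)) := by
        refine setLIntegral_mono' measurableSet_Ico fun x hx => ?_
        have hAx : m ≤ A x := hmA x ⟨hx.1, hx.2.le⟩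
        have hxM : A x ≤ M := hAM x ⟨hx.1, hx.2.le⟩
        rw [ENNReal.ofReal_mul_sq (div_nonneg (hm.le.trans hAx) (sq_nonneg x))]
        refine mul_le_mul' (ENNReal.ofReal_le_ofReal ?_) (enorm_sq_le_of_hasDerivAt_of_eq_zero
          hAm hv hm ⟨hx.1, hx.2.le⟩ hw hw1 fun t ht => hmA t (Ioo_subset_Icc_self ht))
        exact div_le_div₀ ((hm.le.trans hAx).trans hxM) hxM (by positivity)
          (pow_le_pow_left₀ hδ.le hx.1 2)
    _ ≤ ENNReal.ofReal (M / δ ^ 2) * ENNReal.ofReal ((1 - δ) / m) *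
          ∫⁻ x in Ioo δ 1, ENNReal.ofReal (A x * v x ^ 2) := by
        rw [setLIntegral_const, Real.volume_Ico, ← mul_assoc]
        exact mul_le_of_le_one_right' (ENNReal.ofReal_le_one.2 (by linarith))

end BoundedWeight

theorem lintegral_Ioo_zero_one_div_sq_mul_sq_le {A v w : ℝ → ℝ} {δ θ m M : ℝ}
    (hAm : Measurable A) (hv : Measurable v) (hδ : 0 < δ) (hδ1 : δ ≤ 1) (hθ : 1 < θ)
    (hA : ∀ x ∈ Ioc 0 δ, 0 < A x) (hmono : MonotoneOn (fun x => A x / x ^ θ) (Ioc 0 δ))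
    (hm : 0 < m) (hmA : ∀ x ∈ Icc δ 1, m ≤ A x) (hAM : ∀ x ∈ Icc δ 1, A x ≤ M)
    (hw : ∀ x ∈ Ioc 0 1, HasDerivAt w (v x) x) (hw1 : w 1 = 0) :
    ∫⁻ x in Ioo 0 1, ENNReal.ofReal (A x / x ^ 2 * w x ^ 2) ≤
      ENNReal.ofReal ((2 * A δ / (δ * (θ - 1)) + M / δ ^ 2) * ((1 - δ) / m) + 8 / (θ - 1) ^ 2) *
        ∫⁻ x in Ioo 0 1, ENNReal.ofReal (A x * v x ^ 2) := by
  set E := ∫⁻ x in Ioo 0 1, ENNReal.ofReal (A x * v x ^ 2)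
  have hw_far : ∀ x ∈ Icc δ 1, HasDerivAt w (v x) x := fun x hx => hw x ⟨hδ.trans_le hx.1, hx.2⟩
  have h_near := lintegral_Ioo_zero_div_sq_mul_sq_le hmono hA hAm hv hδ hθ
    fun x hx => hw x ⟨hx.1, hx.2.trans hδ1⟩
  have h_far := lintegral_Ico_div_sq_mul_sq_le hAm hv hm hδ hmA hAM hw_far hw1
  have h_wδ := enorm_sq_le_of_hasDerivAt_of_eq_zero hAm hv hm ⟨le_rfl, hδ1⟩ hw_far hw1
    fun t ht => hmA t (Ioo_subset_Icc_self ht)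
  have hE_near : ∫⁻ x in Ioo 0 δ, ENNReal.ofReal (A x * v x ^ 2) ≤ E :=
    lintegral_mono_set (Ioo_subset_Ioo_right hδ1)
  have hE_far : ∫⁻ x in Ioo δ 1, ENNReal.ofReal (A x * v x ^ 2) ≤ E :=
    lintegral_mono_set (Ioo_subset_Ioo_left hδ.le)
  rw [← Ioo_union_Ico_eq_Ioo hδ hδ1,
    lintegral_union measurableSet_Ico (disjoint_left.2 fun x hx hx' => hx.2.not_ge hx'.1)]
  calc _ ≤ (2 * (ENNReal.ofReal ((1 - δ) / m) * E) * ENNReal.ofReal (A δ / (δ * (θ - 1))) +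
          ENNReal.ofReal (8 / (θ - 1) ^ 2) * E) +
          ENNReal.ofReal (M / δ ^ 2) * ENNReal.ofReal ((1 - δ) / m) * E := by
        refine add_le_add (h_near.trans ?_) (h_far.trans (by gcongr))
        gcongr
        exact h_wδ.trans (by gcongr)
    _ = _ := by
        have hθ1 : 0 < θ - 1 := by linarith
        have hAδ := hA δ ⟨hδ, le_rfl⟩
        have hM : 0 ≤ M := (hm.trans_le (hmA δ ⟨le_rfl, hδ1⟩)).le.trans (hAM δ ⟨le_rfl, hδ1⟩)
        have hq : 0 ≤ (1 - δ) / m := div_nonneg (by linarith) hm.le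
        have h_const : (2 * A δ / (δ * (θ - 1)) + M / δ ^ 2) * ((1 - δ) / m) + 8 / (θ - 1) ^ 2 =
            2 * ((1 - δ) / m * (A δ / (δ * (θ - 1)))) + 8 / (θ - 1) ^ 2 +
              M / δ ^ 2 * ((1 - δ) / m) := by
          ring
        rw [h_const, ENNReal.ofReal_add (by positivity) (by positivity),
          ENNReal.ofReal_add (by positivity) (by positivity), ENNReal.ofReal_mul zero_le_two,
          ENNReal.ofReal_mul hq, ENNReal.ofReal_mul (by positivity), ENNReal.ofReal_ofNat]
        ring

theorem hardy_poincare_case_b_general (a : ℝ → ℝ)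
    (ha_cont : ContinuousOn a (Icc 0 1))
    (ha_pos : ∀ x ∈ Ioc (0:ℝ) 1, 0 < a x)
    (θ : ℝ) (hθ : θ ∈ Ioo (1:ℝ) 2)
    (hmono : ∃ δ ∈ Ioc (0:ℝ) 1, MonotoneOn (fun x => a x / x ^ θ) (Ioc 0 δ)) :
    ∃ C_H > (0:ℝ), ∀ w w' : ℝ → ℝ,
      (∀ x ∈ Ioc (0:ℝ) 1, HasDerivAt w (w' x) x) →
      w 1 = 0 →
      (∫⁻ x in Ioo (0:ℝ) 1, ENNReal.ofReal (a x * w' x ^ 2)) < ⊤ →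
      (∫⁻ x in Ioo (0:ℝ) 1, ENNReal.ofReal (a x / x ^ 2 * w x ^ 2)) ≤
        ENNReal.ofReal C_H * ∫⁻ x in Ioo (0:ℝ) 1, ENNReal.ofReal (a x * w' x ^ 2) := by
  obtain ⟨δ, ⟨hδ, hδ1⟩, hmono⟩ := hmono
  set A := IccExtend zero_le_one ((Icc (0:ℝ) 1).domRestrict a)
  have hA : Continuous A := ha_cont.domRestrict.Icc_extend'
  have hAa : EqOn A a (Icc 0 1) := fun x hx => IccExtend_of_mem zero_le_one _ hx
  have hA_pos : ∀ x ∈ Ioc 0 1, 0 < A x := fun x hx => hAa ⟨hx.1.le, hx.2⟩ ▸ ha_pos x hx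
  obtain ⟨xm, hxm, hmin⟩ := isCompact_Icc.exists_isMinOn (nonempty_Icc.2 hδ1) hA.continuousOn
  obtain ⟨xM, hxM, hmax⟩ := isCompact_Icc.exists_isMaxOn (nonempty_Icc.2 hδ1) hA.continuousOn
  have hm := hA_pos xm ⟨hδ.trans_le hxm.1, hxm.2⟩
  have hM := hA_pos xM ⟨hδ.trans_le hxM.1, hxM.2⟩
  have hAδ := hA_pos δ ⟨hδ, hδ1⟩
  have hθ1 : 0 < θ - 1 := by linarith [hθ.1]
  have hδ1' : 0 ≤ 1 - δ := by linarith
  refine ⟨(2 * A δ / (δ * (θ - 1)) + A xM / δ ^ 2) * ((1 - δ) / A xm) + 8 / (θ - 1) ^ 2,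
    by positivity, fun w w' hw hw1 _ => ?_⟩
  -- `w'` need not be measurable, but `deriv w` is and agrees with it on `(0, 1]`.
  have h_bound := lintegral_Ioo_zero_one_div_sq_mul_sq_le hA.measurable (measurable_deriv w)
    hδ hδ1 hθ.1 (fun x hx => hA_pos x ⟨hx.1, hx.2.trans hδ1⟩)
    (hmono.congr fun x hx => by simp only [hAa ⟨hx.1.le, hx.2.trans hδ1⟩]) hm
    (fun x hx => hmin hx) (fun x hx => hmax hx)
    (fun x hx => (hw x hx).differentiableAt.hasDerivAt) hw1
  calc ∫⁻ x in Ioo 0 1, ENNReal.ofReal (a x / x ^ 2 * w x ^ 2)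
      = ∫⁻ x in Ioo 0 1, ENNReal.ofReal (A x / x ^ 2 * w x ^ 2) :=
        setLIntegral_congr_fun measurableSet_Ioo fun x hx => by rw [hAa ⟨hx.1.le, hx.2.le⟩]
    _ ≤ _ := h_bound
    _ = _ := by
        congr 1
        refine setLIntegral_congr_fun measurableSet_Ioo fun x hx => ?_
        rw [hAa ⟨hx.1.le, hx.2.le⟩, (hw x ⟨hx.1, hx.2.le⟩).deriv]

/-- Hardy–Poincaré inequality, case (b): if `x ↦ a(x)/x^θ` is nondecreasing near `0`
for some `θ ∈ (1,2)`, then `∫₀¹ (a/x²) w² ≤ C_H ∫₀¹ a |w'|²` for every `w` that is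
differentiable on `(0,1]`, vanishes at `1`, and has `∫₀¹ a |w'|² < ∞`. -/
theorem hardy_poincare_case_b (a : ℝ → ℝ)
    (ha_cont : ContinuousOn a (Icc 0 1))
    (ha0 : a 0 = 0)
    (ha_pos : ∀ x ∈ Ioc (0:ℝ) 1, 0 < a x)
    (θ : ℝ) (hθ : θ ∈ Ioo (1:ℝ) 2)
    (hmono : ∃ δ ∈ Ioc (0:ℝ) 1, MonotoneOn (fun x => a x / x ^ θ) (Ioc 0 δ)) :
    ∃ C_H > (0:ℝ), ∀ w w' : ℝ → ℝ,
      (∀ x ∈ Ioc (0:ℝ) 1, HasDerivAt w (w' x) x) →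
      w 1 = 0 →
      (∫⁻ x in Ioo (0:ℝ) 1, ENNReal.ofReal (a x * w' x ^ 2)) < ⊤ →
      (∫⁻ x in Ioo (0:ℝ) 1, ENNReal.ofReal (a x / x ^ 2 * w x ^ 2)) ≤
        ENNReal.ofReal C_H * ∫⁻ x in Ioo (0:ℝ) 1, ENNReal.ofReal (a x * w' x ^ 2) :=
  hardy_poincare_case_b_general a ha_cont ha_pos θ hθ hmono
end

section
/- There exist constants C>0 and λ₀>0 such that for every λ ≥ λ₀, every s>0 and every regular solution v of the auxiliary degenerate problem with right-hand side h ∈ L²(Q), setting w = e^{sφ} v, one has s³ ∬_Q a φ_x (a φ_x²)_x w² ≥ C λ⁴ s³ ∬_Q a² |ψ'|⁴ σ³ w² − C s³ λ³ ∬_{(0,T)×ω'} σ³ w² + C s³ λ³ ∫₀ᵀ ∫₀^{α'} (x²/a) σ³ w². -/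
open MeasureTheory Set Real Filter

noncomputable section

/-- The sup norm of `ψ` on `[0,1]`. -/
def psiSup (ψ : ℝ → ℝ) : ℝ := ⨆ x : Icc (0:ℝ) 1, |ψ x.1|

/-- `Θ(t) = 1/(t(T-t))⁴`. -/
def thetaFun (T t : ℝ) : ℝ := 1 / (t * (T - t)) ^ 4

/-- `η(x) = exp (λ(‖ψ‖_∞ + ψ x))`. -/
def etaFun (ψ : ℝ → ℝ) (lam x : ℝ) : ℝ := exp (lam * (psiSup ψ + ψ x))

/-- `σ(t,x) = Θ(t) η(x)`. -/
def sigmaFun (T : ℝ) (ψ : ℝ → ℝ) (lam t x : ℝ) : ℝ := thetaFun T t * etaFun ψ lam x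

/-- `φ(t,x) = Θ(t) (exp (λ(‖ψ‖_∞ + ψ x)) - exp (3λ‖ψ‖_∞))`. -/
def phiFun (T : ℝ) (ψ : ℝ → ℝ) (lam t x : ℝ) : ℝ :=
  thetaFun T t * (etaFun ψ lam x - exp (3 * (lam * psiSup ψ)))

/-- Partial derivative in the space variable. -/
def pderivX (f : ℝ → ℝ → ℝ) (t x : ℝ) : ℝ := deriv (fun y => f t y) x

/-- Partial derivative in the time variable. -/
def pderivT (f : ℝ → ℝ → ℝ) (t x : ℝ) : ℝ := deriv (fun τ => f τ x) t

/-- `w = e^{sφ} v`. -/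
def wFun (T : ℝ) (ψ : ℝ → ℝ) (lam s : ℝ) (v : ℝ → ℝ → ℝ) (t x : ℝ) : ℝ :=
  exp (s * phiFun T ψ lam t x) * v t x

/-- The cylinder `(0,T) × (l,r)`. -/
def QSub (T l r : ℝ) : Set (ℝ × ℝ) := Ioo 0 T ×ˢ Ioo l r

/-- Structural hypotheses on the degenerate coefficient `a` (whose derivative on `(0,1]`
is the given function `a'`): `a ∈ C([0,1]) ∩ C¹((0,1])` is nondecreasing, `a(0) = 0` and
`a > 0` on `(0,1]`. -/
structure DegenCoeff (a a' : ℝ → ℝ) : Prop where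
  cont : ContinuousOn a (Icc 0 1)
  hasDeriv : ∀ x ∈ Ioc (0:ℝ) 1, HasDerivAt a (a' x) x
  contDeriv : ContinuousOn a' (Ioc 0 1)
  mono : MonotoneOn a (Icc 0 1)
  zero : a 0 = 0
  pos : ∀ x ∈ Ioc (0:ℝ) 1, 0 < a x

/-- Weak degeneracy: `x a'(x) ≤ K a(x)` on `(0,1]` with `K ∈ [0,1)`. -/
def DegenWeak (a a' : ℝ → ℝ) (K : ℝ) : Prop :=
  0 ≤ K ∧ K < 1 ∧ ∀ x ∈ Ioc (0:ℝ) 1, x * a' x ≤ K * a x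

/-- Strong degeneracy: `x a'(x) ≤ K a(x)` on `(0,1]` with `K ∈ [1,2)`, together with the
additional condition `θ a ≤ x a'` near zero, with `θ ∈ (1,K]` if `K > 1` and `θ ∈ (0,1)`
if `K = 1`. -/
def DegenStrong (a a' : ℝ → ℝ) (K : ℝ) : Prop :=
  1 ≤ K ∧ K < 2 ∧ (∀ x ∈ Ioc (0:ℝ) 1, x * a' x ≤ K * a x) ∧
    ∃ θ δ : ℝ, 0 < δ ∧ δ ≤ 1 ∧ (∀ x ∈ Ioc (0:ℝ) δ, θ * a x ≤ x * a' x) ∧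
      (1 < K → 1 < θ ∧ θ ≤ K) ∧ (K = 1 → 0 < θ ∧ θ < 1)

/-- The weight function `ψ ∈ C²([0,1])`, equal to `∫₀ˣ y/a(y) dy` on `[0, l)` and to
`-∫_r^x y/a(y) dy` on `[r, 1]`. -/
structure WeightPsi (a : ℝ → ℝ) (l r : ℝ) (ψ : ℝ → ℝ) : Prop where
  smooth : ContDiffOn ℝ 2 ψ (Icc 0 1)
  left : ∀ x ∈ Ico (0:ℝ) l, ψ x = ∫ y in (0:ℝ)..x, y / a y
  right : ∀ x ∈ Icc r 1, ψ x = -∫ y in r..x, y / a y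

/-- A regular solution of `v_t + (a v_x)_x = rhs` in `Q = (0,T)×(0,1)` with `v(t,1) = 0`:
`v, v_x` are continuous on `[0,T]×(0,1]`, `v_t, (a v_x)_x` are continuous on `(0,T)×(0,1]`. -/
structure RegSol (T : ℝ) (a : ℝ → ℝ) (rhs : ℝ → ℝ → ℝ) (v : ℝ → ℝ → ℝ) : Prop where
  contV : ContinuousOn (fun p : ℝ × ℝ => v p.1 p.2) (Icc 0 T ×ˢ Ioc 0 1)
  contVx : ContinuousOn (fun p : ℝ × ℝ => pderivX v p.1 p.2) (Icc 0 T ×ˢ Ioc 0 1)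
  contVt : ContinuousOn (fun p : ℝ × ℝ => pderivT v p.1 p.2) (Ioo 0 T ×ˢ Ioc 0 1)
  contAVxx : ContinuousOn
      (fun p : ℝ × ℝ => pderivX (fun t x => a x * pderivX v t x) p.1 p.2)
      (Ioo 0 T ×ˢ Ioc 0 1)
  eq : ∀ t ∈ Ioo 0 T, ∀ x ∈ Ioo (0:ℝ) 1,
      pderivT v t x + pderivX (fun t x => a x * pderivX v t x) t x = rhs t x
  bdryOne : ∀ t ∈ Ioo 0 T, v t 1 = 0

/-- Dirichlet boundary condition at `x = 0` (weak degeneracy case). -/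
def BdryWeak (T : ℝ) (v : ℝ → ℝ → ℝ) : Prop := ∀ t ∈ Ioo 0 T, v t 0 = 0

/-- Boundary condition `(a v_x)(t,0) = 0` at `x = 0` (strong degeneracy case),
understood as a one-sided limit. -/
def BdryStrong (T : ℝ) (a : ℝ → ℝ) (v : ℝ → ℝ → ℝ) : Prop :=
  ∀ t ∈ Ioo 0 T, Tendsto (fun x => a x * pderivX v t x)
    (nhdsWithin 0 (Ioi 0)) (nhds 0)

end

/-! By the chain rule, `a φₓ (a φₓ²)ₓ = λ³ σ³ (2λ a² ψ'⁴ + ψ'² k)` with `k = a (a' ψ' + 2 a ψ'')`,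
so it suffices to bound the bracket from below pointwise and integrate over `Q`.

* On `(0, α')`, `a ψ' = x`, hence `k = 2a - x a' ≥ (2 - K) a` and `ψ'² k ≥ (2 - K) x² / a`: this
  produces the zero-order term near the degenerate end. (That `ψ' = x / a` there at all uses
  `K < 2`: `a(y) ≥ a(x) (y/x)^K` makes `y / a(y)` integrable at `0`.)
* On `(β', 1)`, `a ψ' = -x`, hence `k = x a' - 2a ≥ -2 a(1)` since `a` is nondecreasing, and this
  is absorbed by `λ a² ψ'⁴ = λ x² ψ'²` as soon as `λ β'² ≥ 2 a(1)`.
* On the compact `[α', β']`, `k ≥ m` for some `m`, and by AM–GM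
  `λ a² ψ'⁴ + C ≥ 2 √(λ C) a(α') ψ'² ≥ -m ψ'²` as soon as `m² ≤ 4 C λ a(α')²`.
-/

open Topology

namespace DegenCoeff

variable {a a' : ℝ → ℝ} {K : ℝ}

lemma continuousOn_div (ha : DegenCoeff a a') : ContinuousOn (fun y => y / a y) (Ioc 0 1) :=
  continuousOn_id.div (ha.cont.mono Ioc_subset_Icc_self) fun y hy => (ha.pos y hy).ne'

lemma deriv_nonneg (ha : DegenCoeff a a') {x : ℝ} (hx : x ∈ Ioo 0 1) : 0 ≤ a' x :=
  (ha.hasDeriv x (Ioo_subset_Ioc_self hx)).hasDerivWithinAt.nonneg_of_monotoneOn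
    (by simpa using (PerfectSpace.univ_preperfect.open_inter isOpen_Ioo) x (by simpa using hx))
    (ha.mono.mono Ioo_subset_Icc_self)

lemma antitoneOn_mul_rpow_neg (ha : DegenCoeff a a')
    (hK : ∀ x ∈ Ioc (0:ℝ) 1, x * a' x ≤ K * a x) :
    AntitoneOn (fun y => a y * y ^ (-K)) (Ioc 0 1) := by
  refine antitoneOn_of_hasDerivWithinAt_nonpos (convex_Ioc 0 1)
    ((ha.cont.mono Ioc_subset_Icc_self).mul
      (continuousOn_id.rpow_const fun y hy => Or.inl hy.1.ne'))
    (f' := fun x => (x * a' x - K * a x) * x ^ (-K - 1)) ?_ ?_ <;> rw [interior_Ioc] <;>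
    intro x hx
  · have hd : HasDerivAt (fun y => a y * y ^ (-K))
        (a' x * x ^ (-K) + a x * (-K * x ^ (-K - 1))) x :=
      (ha.hasDeriv x (Ioo_subset_Ioc_self hx)).mul (hasDerivAt_rpow_const (Or.inl hx.1.ne'))
    refine hd.hasDerivWithinAt.congr_deriv ?_
    have hx0 := hx.1.ne'
    rw [rpow_sub_one hx0]
    field_simp
    ring
  · exact mul_nonpos_of_nonpos_of_nonneg (sub_nonpos.2 (hK x (Ioo_subset_Ioc_self hx)))
      (rpow_nonneg hx.1.le _)

lemma intervalIntegrable_div (ha : DegenCoeff a a')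
    (hK : ∀ x ∈ Ioc (0:ℝ) 1, x * a' x ≤ K * a x) (hK2 : K < 2) {x : ℝ} (hx : x ∈ Ioc (0:ℝ) 1) :
    IntervalIntegrable (fun y => y / a y) volume 0 x := by
  rw [intervalIntegrable_iff_integrableOn_Ioc_of_le hx.1.le]
  have hpow : IntegrableOn (fun y => x ^ K / a x * y ^ (1 - K)) (Ioc 0 x) :=
    ((intervalIntegrable_iff_integrableOn_Ioc_of_le hx.1.le).1
      (intervalIntegral.intervalIntegrable_rpow' (by linarith))).const_mul _
  refine hpow.mono' ((ha.continuousOn_div.mono fun y hy => ⟨hy.1, hy.2.trans hx.2⟩)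
    |>.aestronglyMeasurable measurableSet_Ioc) ?_
  refine (ae_restrict_mem measurableSet_Ioc).mono fun y hy => ?_
  have hy1 : y ∈ Ioc (0:ℝ) 1 := ⟨hy.1, hy.2.trans hx.2⟩
  have hax := ha.pos x hx
  have hay := ha.pos y hy1
  have hxK : 0 < a x * x ^ (-K) := mul_pos hax (rpow_pos_of_pos hx.1 _)
  rw [norm_of_nonneg (div_nonneg hy.1.le hay.le)]
  calc y / a y = y * (a x * x ^ (-K)) / (a x * x ^ (-K)) / a y
        := by rw [mul_div_cancel_right₀ _ hxK.ne']
    _ ≤ y * (a y * y ^ (-K)) / (a x * x ^ (-K)) / a y := by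
      gcongr ?_ / _ / _
      exact mul_le_mul_of_nonneg_left (antitoneOn_mul_rpow_neg ha hK hy1 hx hy.2) hy.1.le
    _ = x ^ K / a x * y ^ (1 - K) := by
      rw [rpow_neg hy.1.le, rpow_neg hx.1.le, rpow_sub hy.1, rpow_one]
      field_simp

end DegenCoeff

lemma deriv_eventuallyEq_of_eqOn_integral {f ψ : ℝ → ℝ} {U : Set ℝ} {b c x : ℝ} (hU : IsOpen U)
    (hψ : EqOn ψ (fun y => c * ∫ z in b..y, f z) U) (hf : ContinuousOn f U)
    (hint : ∀ y ∈ U, IntervalIntegrable f volume b y) (hx : x ∈ U) :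
    deriv ψ =ᶠ[𝓝 x] fun y => c * f y := by
  filter_upwards [hU.mem_nhds hx] with y hy
  refine HasDerivAt.deriv <| HasDerivAt.congr_of_eventuallyEq ?_
    (eventuallyEq_of_mem (hU.mem_nhds hy) hψ)
  exact (intervalIntegral.integral_hasDerivAt_right (hint y hy)
    (hf.stronglyMeasurableAtFilter hU y hy) (hf.continuousAt (hU.mem_nhds hy))).const_mul c

namespace WeightPsi

variable {a a' ψ : ℝ → ℝ} {l r K : ℝ}

lemma deriv_eventuallyEq_left (hψ : WeightPsi a l r ψ) (ha : DegenCoeff a a')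
    (hK : ∀ x ∈ Ioc (0:ℝ) 1, x * a' x ≤ K * a x) (hK2 : K < 2) (hl : l ≤ 1) {x : ℝ}
    (hx : x ∈ Ioo 0 l) : deriv ψ =ᶠ[𝓝 x] fun y => 1 * (y / a y) :=
  deriv_eventuallyEq_of_eqOn_integral isOpen_Ioo
    (fun y hy => (hψ.left y (Ioo_subset_Ico_self hy)).trans (one_mul _).symm)
    (ha.continuousOn_div.mono fun _ hy => ⟨hy.1, hy.2.le.trans hl⟩)
    (fun _ hy => ha.intervalIntegrable_div hK hK2 ⟨hy.1, hy.2.le.trans hl⟩) hx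

lemma deriv_eventuallyEq_right (hψ : WeightPsi a l r ψ) (ha : DegenCoeff a a') (hr : 0 < r)
    {x : ℝ} (hx : x ∈ Ioo r 1) : deriv ψ =ᶠ[𝓝 x] fun y => -1 * (y / a y) :=
  deriv_eventuallyEq_of_eqOn_integral isOpen_Ioo
    (fun y hy => (hψ.right y (Ioo_subset_Icc_self hy)).trans (neg_one_mul _).symm)
    (ha.continuousOn_div.mono fun _ hy => ⟨hr.trans hy.1, hy.2.le⟩)
    (fun _ hy => ContinuousOn.intervalIntegrable_of_Icc hy.1.le
      (ha.continuousOn_div.mono fun _ hz => ⟨hr.trans_le hz.1, hz.2.trans hy.2.le⟩)) hx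

end WeightPsi

noncomputable def weightKernel (a a' ψ : ℝ → ℝ) (x : ℝ) : ℝ :=
  a x * (a' x * deriv ψ x + 2 * a x * deriv (deriv ψ) x)

lemma weightKernel_eq_of_deriv_eventuallyEq {a a' ψ : ℝ → ℝ} {c x : ℝ}
    (hψ : deriv ψ =ᶠ[𝓝 x] fun y => c * (y / a y)) (ha : HasDerivAt a (a' x) x) (hax : a x ≠ 0) :
    a x * deriv ψ x = c * x ∧ weightKernel a a' ψ x = c * (2 * a x - x * a' x) := by
  have h1 : deriv ψ x = c * (x / a x) := hψ.eq_of_nhds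
  have h2 : deriv (deriv ψ) x = c * ((1 * a x - x * a' x) / a x ^ 2) := by
    rw [hψ.deriv_eq]
    exact (((hasDerivAt_id x).div ha hax).const_mul c).deriv
  refine ⟨by rw [h1]; field_simp, ?_⟩
  rw [weightKernel, h1, h2]
  field_simp
  ring

lemma continuousOn_weightKernel {a a' ψ : ℝ → ℝ} (ha : DegenCoeff a a')
    (hψ : ContDiffOn ℝ 2 ψ (Ioo 0 1)) : ContinuousOn (weightKernel a a' ψ) (Ioo 0 1) := by
  have hψ' : ContDiffOn ℝ 1 (deriv ψ) (Ioo 0 1) := hψ.deriv_of_isOpen isOpen_Ioo (by norm_num)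
  have hac := ha.cont.mono Ioo_subset_Icc_self
  exact hac.mul (((ha.contDeriv.mono Ioo_subset_Ioc_self).mul hψ'.continuousOn).add
    ((continuousOn_const.mul hac).mul (hψ'.continuousOn_deriv_of_isOpen isOpen_Ioo le_rfl)))

section Weight

variable {T lam d x : ℝ} {a a' ψ : ℝ → ℝ}

lemma hasDerivAt_etaFun (hψ : HasDerivAt ψ d x) :
    HasDerivAt (etaFun ψ lam) (lam * d * etaFun ψ lam x) x := by
  have := ((hψ.const_add (psiSup ψ)).const_mul lam).exp
  unfold etaFun
  convert this using 1
  ring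

lemma pderivX_phiFun (hψ : HasDerivAt ψ d x) (t : ℝ) :
    pderivX (phiFun T ψ lam) t x = thetaFun T t * (lam * d * etaFun ψ lam x) :=
  (((hasDerivAt_etaFun hψ).sub_const _).const_mul (thetaFun T t)).deriv

lemma sigmaFun_nonneg (t : ℝ) : 0 ≤ sigmaFun T ψ lam t x :=
  mul_nonneg (by rw [thetaFun]; positivity) (exp_pos _).le

noncomputable def principalBracket (a a' ψ : ℝ → ℝ) (lam x : ℝ) : ℝ :=
  2 * lam * a x ^ 2 * deriv ψ x ^ 4 + deriv ψ x ^ 2 * weightKernel a a' ψ x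

lemma a_mul_pderivX_phiFun_mul_pderivX_eq {U : Set ℝ} (hU : IsOpen U) (hψ : ContDiffOn ℝ 2 ψ U)
    (hx : x ∈ U) (ha : HasDerivAt a (a' x) x) (t : ℝ) :
    a x * pderivX (phiFun T ψ lam) t x
        * pderivX (fun t x => a x * pderivX (phiFun T ψ lam) t x ^ 2) t x
      = lam ^ 3 * sigmaFun T ψ lam t x ^ 3 * principalBracket a a' ψ lam x := by
  have hD1 : ∀ y ∈ U, HasDerivAt ψ (deriv ψ y) y := fun y hy =>
    ((hψ.differentiableOn (by norm_num)).differentiableAt (hU.mem_nhds hy)).hasDerivAt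
  have hD2 : HasDerivAt (deriv ψ) (deriv (deriv ψ) x) x :=
    (((hψ.deriv_of_isOpen hU (m := 1) (by norm_num)).differentiableOn one_ne_zero).differentiableAt
      (hU.mem_nhds hx)).hasDerivAt
  have hφx : (fun y => a y * pderivX (phiFun T ψ lam) t y ^ 2) =ᶠ[𝓝 x]
      fun y => a y * ((thetaFun T t * lam) ^ 2 * (deriv ψ y * etaFun ψ lam y) ^ 2) := by
    filter_upwards [hU.mem_nhds hx] with y hy
    rw [pderivX_phiFun (hD1 y hy)]
    ring
  have hderiv : HasDerivAt
      (fun y => a y * ((thetaFun T t * lam) ^ 2 * (deriv ψ y * etaFun ψ lam y) ^ 2)) _ x :=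
    ha.mul (((hD2.mul (hasDerivAt_etaFun (lam := lam) (hD1 x hx))).pow 2).const_mul
      ((thetaFun T t * lam) ^ 2))
  rw [pderivX_phiFun (hD1 x hx), pderivX, hφx.deriv_eq, hderiv.deriv, principalBracket,
    weightKernel, sigmaFun, Pi.mul_apply]
  ring

end Weight

section Regions

variable {a a' ψ : ℝ → ℝ} {α' β' K C lam m x : ℝ}

lemma le_principalBracket_left (ha : DegenCoeff a a') (hψ : WeightPsi a α' β' ψ)
    (hK : ∀ x ∈ Ioc (0:ℝ) 1, x * a' x ≤ K * a x) (hK2 : K < 2) (hα' : α' ≤ 1)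
    (hC1 : C ≤ 1) (hCK : C ≤ 2 - K) (hlam : 0 ≤ lam) (hx : x ∈ Ioo 0 α') :
    C * lam * a x ^ 2 * deriv ψ x ^ 4 + C * (x ^ 2 / a x) ≤ principalBracket a a' ψ lam x := by
  rw [principalBracket]
  have hx1 : x ∈ Ioc (0:ℝ) 1 := ⟨hx.1, hx.2.le.trans hα'⟩
  have hax := ha.pos x hx1
  obtain ⟨hd, hk⟩ := weightKernel_eq_of_deriv_eventuallyEq
    (hψ.deriv_eventuallyEq_left ha hK hK2 hα' hx) (ha.hasDeriv x hx1) hax.ne'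
  have hx2 : x ^ 2 / a x = a x * deriv ψ x ^ 2 := by
    rw [div_eq_iff hax.ne']
    linear_combination (-(x + a x * deriv ψ x)) * hd
  have hCk : C * a x ≤ weightKernel a a' ψ x := by
    nlinarith [hK x hx1]
  rw [hx2]
  nlinarith [mul_le_mul_of_nonneg_left hCk (sq_nonneg (deriv ψ x)),
    mul_nonneg (mul_nonneg (sub_nonneg.2 (hC1.trans one_le_two)) hlam)
      (by positivity : 0 ≤ a x ^ 2 * deriv ψ x ^ 4)]

lemma le_principalBracket_mid (ha : DegenCoeff a a') (hα' : 0 < α') (hβ' : β' ≤ 1)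
    (hm : ∀ y ∈ Icc α' β', m ≤ weightKernel a a' ψ y) (hC : 0 < C) (hC1 : C ≤ 1)
    (hlam : 0 ≤ lam) (hlamm : m ^ 2 ≤ lam * (4 * C * a α' ^ 2)) (hx : x ∈ Ioo α' β') :
    C * lam * a x ^ 2 * deriv ψ x ^ 4 - C ≤ principalBracket a a' ψ lam x := by
  rw [principalBracket]
  have hx1 : x ∈ Icc (0:ℝ) 1 := ⟨hα'.le.trans hx.1.le, hx.2.le.trans hβ'⟩
  have hα'a := ha.pos α' ⟨hα', hx.1.le.trans hx1.2⟩
  have hA : a α' ^ 2 ≤ a x ^ 2 :=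
    pow_le_pow_left₀ hα'a.le (ha.mono ⟨hα'.le, hx.1.le.trans hx1.2⟩ hx1 hx.1.le) 2
  set q := deriv ψ x ^ 2
  have hq : 0 ≤ q := sq_nonneg _
  have hmq : q * m ≤ q * weightKernel a a' ψ x :=
    mul_le_mul_of_nonneg_left (hm x (Ioo_subset_Icc_self hx)) hq
  have hamgm : 0 ≤ lam * a x ^ 2 * q ^ 2 + C + m * q := by
    have h4 : (m * q) ^ 2 ≤ 4 * C * (lam * a x ^ 2 * q ^ 2) := by
      have := mul_le_mul_of_nonneg_left hA (by positivity : 0 ≤ 4 * C * lam)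
      nlinarith [mul_le_mul_of_nonneg_right hlamm (sq_nonneg q),
        mul_le_mul_of_nonneg_right this (sq_nonneg q)]
    nlinarith [sq_nonneg (m * q + 2 * C)]
  have hq4 : deriv ψ x ^ 4 = q ^ 2 := by ring
  rw [hq4]
  nlinarith [mul_nonneg (mul_nonneg (sub_nonneg.2 hC1) hlam) (by positivity : 0 ≤ a x ^ 2 * q ^ 2)]

lemma le_principalBracket_right (ha : DegenCoeff a a') (hψ : WeightPsi a α' β' ψ) (hβ' : 0 < β')
    (hC1 : C ≤ 1) (hlam : 2 * a 1 ≤ lam * β' ^ 2) (hx : x ∈ Ioo β' 1) :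
    C * lam * a x ^ 2 * deriv ψ x ^ 4 ≤ principalBracket a a' ψ lam x := by
  rw [principalBracket]
  have hx1 : x ∈ Ioo (0:ℝ) 1 := ⟨hβ'.trans hx.1, hx.2⟩
  have hax := ha.pos x (Ioo_subset_Ioc_self hx1)
  obtain ⟨hd, hk⟩ := weightKernel_eq_of_deriv_eventuallyEq
    (hψ.deriv_eventuallyEq_right ha hβ' hx) (ha.hasDeriv x (Ioo_subset_Ioc_self hx1)) hax.ne'
  have ha1 : a x ≤ a 1 := ha.mono (Ioo_subset_Icc_self hx1) ⟨zero_le_one, le_rfl⟩ hx1.2.le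
  have hlam0 : 0 ≤ lam := by
    nlinarith [ha.pos 1 ⟨one_pos, le_rfl⟩, sq_nonneg β']
  have hk' : -(lam * (a x * deriv ψ x) ^ 2) ≤ weightKernel a a' ψ x := by
    rw [hk, hd]
    nlinarith [mul_nonneg hx1.1.le (ha.deriv_nonneg hx1),
      mul_le_mul_of_nonneg_left (pow_le_pow_left₀ hβ'.le hx.1.le 2) hlam0]
  nlinarith [mul_le_mul_of_nonneg_left hk' (sq_nonneg (deriv ψ x)),
    mul_nonneg (mul_nonneg (sub_nonneg.2 hC1) hlam0) (by positivity : 0 ≤ a x ^ 2 * deriv ψ x ^ 4)]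

end Regions

lemma integrand_lower_bound {T α' β' K C lam m : ℝ} {a a' ψ : ℝ → ℝ} (ha : DegenCoeff a a')
    (hψ : WeightPsi a α' β' ψ) (hK : ∀ x ∈ Ioc (0:ℝ) 1, x * a' x ≤ K * a x) (hK2 : K < 2)
    (hα' : 0 < α') (hα'β' : α' < β') (hβ' : β' < 1)
    (hm : ∀ y ∈ Icc α' β', m ≤ weightKernel a a' ψ y) (hC : 0 < C) (hC1 : C ≤ 1)
    (hCK : C ≤ 2 - K) (hlam : 0 ≤ lam) (hlamm : m ^ 2 ≤ lam * (4 * C * a α' ^ 2))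
    (hlam1 : 2 * a 1 ≤ lam * β' ^ 2) (w : ℝ → ℝ → ℝ) {p : ℝ × ℝ} (hp : p ∈ QSub T 0 1)
    (hpα' : p.2 ≠ α') (hpβ' : p.2 ≠ β') :
    C * lam ^ 4 * (a p.2 ^ 2 * |deriv ψ p.2| ^ 4 * sigmaFun T ψ lam p.1 p.2 ^ 3 * w p.1 p.2 ^ 2)
        - (QSub T α' β').indicator
          (fun q => C * lam ^ 3 * (sigmaFun T ψ lam q.1 q.2 ^ 3 * w q.1 q.2 ^ 2)) p
        + (QSub T 0 α').indicator (fun q => C * lam ^ 3 *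
          (q.2 ^ 2 / a q.2 * sigmaFun T ψ lam q.1 q.2 ^ 3 * w q.1 q.2 ^ 2)) p
      ≤ a p.2 * pderivX (phiFun T ψ lam) p.1 p.2
        * pderivX (fun t x => a x * pderivX (phiFun T ψ lam) t x ^ 2) p.1 p.2 * w p.1 p.2 ^ 2 := by
  obtain ⟨t, x⟩ := p
  obtain ⟨ht, hx⟩ := hp
  dsimp only at hx hpα' hpβ' ⊢
  rw [a_mul_pderivX_phiFun_mul_pderivX_eq isOpen_Ioo (hψ.smooth.mono Ioo_subset_Icc_self) hx
    (ha.hasDeriv x (Ioo_subset_Ioc_self hx)), Even.pow_abs ⟨2, rfl⟩]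
  have hP : 0 ≤ lam ^ 3 * sigmaFun T ψ lam t x ^ 3 * w t x ^ 2 := by
    have := sigmaFun_nonneg (T := T) (ψ := ψ) (lam := lam) (x := x) t
    positivity
  rcases lt_or_gt_of_ne hpα' with hxα' | hxα'
  · rw [indicator_of_notMem (fun h => lt_asymm h.2.1 hxα'),
      indicator_of_mem (show (t, x) ∈ QSub T 0 α' from ⟨ht, hx.1, hxα'⟩)]
    linear_combination mul_le_mul_of_nonneg_left
      (le_principalBracket_left ha hψ hK hK2 (hα'β'.trans hβ').le hC1 hCK hlam ⟨hx.1, hxα'⟩) hP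
  rw [indicator_of_notMem (fun h => lt_asymm h.2.2 hxα') (s := QSub T 0 α')]
  rcases lt_or_gt_of_ne hpβ' with hxβ' | hxβ'
  · rw [indicator_of_mem (show (t, x) ∈ QSub T α' β' from ⟨ht, hxα', hxβ'⟩)]
    linear_combination mul_le_mul_of_nonneg_left
      (le_principalBracket_mid ha hα' hβ'.le hm hC hC1 hlam hlamm ⟨hxα', hxβ'⟩) hP
  · rw [indicator_of_notMem (fun h => lt_asymm h.2.2 hxβ')]
    linear_combination mul_le_mul_of_nonneg_left
      (le_principalBracket_right ha hψ (hα'.trans hα'β') hC1 hlam1 ⟨hxβ', hx.2⟩) hP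

lemma measurableSet_QSub (T l r : ℝ) : MeasurableSet (QSub T l r) :=
  measurableSet_Ioo.prod measurableSet_Ioo

lemma QSub_subset_QSub {T l r l' r' : ℝ} (hl : l' ≤ l) (hr : r ≤ r') :
    QSub T l r ⊆ QSub T l' r' :=
  prod_mono_right (Ioo_subset_Ioo hl hr)

lemma exists_pos_forall_ge_le_mul {b₁ b₂ c₁ c₂ : ℝ} (hc₁ : 0 < c₁) (hc₂ : 0 < c₂) :
    ∃ l₀ > (0:ℝ), ∀ l ≥ l₀, b₁ ≤ l * c₁ ∧ b₂ ≤ l * c₂ := by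
  obtain ⟨l₀, hl₀⟩ := eventually_atTop.1 <|
    ((tendsto_id.atTop_mul_const hc₁).eventually_ge_atTop b₁).and
      ((tendsto_id.atTop_mul_const hc₂).eventually_ge_atTop b₂)
  exact ⟨max l₀ 1, by positivity, fun l hl => hl₀ l (le_of_max_le_left hl)⟩

lemma ae_snd_ne {α β : Type*} [MeasurableSpace α] [MeasurableSpace β] {μ : Measure α}
    {ν : Measure β} [NullSingletonClass ν] (c : β) : ∀ᵐ p ∂μ.prod ν, p.2 ≠ c :=
  Measure.quasiMeasurePreserving_snd.ae (p := (· ≠ c)) (by simp [ae_iff])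

lemma setIntegral_sub_add_le {α : Type*} [MeasurableSpace α] {μ : Measure α} {s t u : Set α}
    {f g h F : α → ℝ} (ht : MeasurableSet t) (hu : MeasurableSet u) (hts : t ⊆ s) (hus : u ⊆ s)
    (hf : IntegrableOn f s μ) (hg : IntegrableOn g t μ) (hh : IntegrableOn h u μ)
    (hF : IntegrableOn F s μ)
    (hle : ∀ᵐ x ∂μ.restrict s, f x - t.indicator g x + u.indicator h x ≤ F x) :
    ∫ x in s, f x ∂μ - ∫ x in t, g x ∂μ + ∫ x in u, h x ∂μ ≤ ∫ x in s, F x ∂μ := by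
  have hg' : IntegrableOn (t.indicator g) s μ := (hg.integrable_indicator ht).integrableOn
  have hh' : IntegrableOn (u.indicator h) s μ := (hh.integrable_indicator hu).integrableOn
  have := integral_mono_ae (f := fun x => f x - t.indicator g x + u.indicator h x)
    ((hf.sub hg').add hh') hF hle
  rwa [integral_add (f := fun x => f x - t.indicator g x) (hf.sub hg') hh', integral_sub hf hg',
    setIntegral_indicator ht, setIntegral_indicator hu, inter_eq_self_of_subset_right hts,
    inter_eq_self_of_subset_right hus] at this

theorem lower_bound_principal_zero_order_general
    (T αw βw α' β' K : ℝ)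
    (hαw : 0 < αw) (hαα' : αw < α') (hα'β' : α' < β')
    (hβ'β : β' < βw) (hβw : βw < 1)
    (a a' ψ : ℝ → ℝ)
    (ha : DegenCoeff a a')
    (hK : DegenWeak a a' K ∨ DegenStrong a a' K)
    (hψ : WeightPsi a α' β' ψ) :
    ∃ C > (0:ℝ), ∃ lam₀ > (0:ℝ), ∀ lam ≥ lam₀, ∀ s > (0:ℝ),
      ∀ h v : ℝ → ℝ → ℝ,
        IntegrableOn (fun p : ℝ × ℝ => h p.1 p.2 ^ 2) (QSub T 0 1) →
        RegSol T a h v →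
        (BdryWeak T v ∨ BdryStrong T a v) →
        IntegrableOn (fun p : ℝ × ℝ => a p.2 * (pderivX (phiFun T ψ lam) p.1 p.2) * (pderivX (fun t x => a x * (pderivX (phiFun T ψ lam) t x) ^ 2) p.1 p.2) * (wFun T ψ lam s v p.1 p.2) ^ 2) (QSub T 0 1) →
        IntegrableOn (fun p : ℝ × ℝ => (a p.2) ^ 2 * |(deriv ψ p.2)| ^ 4 * (sigmaFun T ψ lam p.1 p.2) ^ 3 * (wFun T ψ lam s v p.1 p.2) ^ 2) (QSub T 0 1) →
        IntegrableOn (fun p : ℝ × ℝ => (sigmaFun T ψ lam p.1 p.2) ^ 3 * (wFun T ψ lam s v p.1 p.2) ^ 2) (QSub T α' β') →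
        IntegrableOn (fun p : ℝ × ℝ => (p.2 ^ 2 / a p.2) * (sigmaFun T ψ lam p.1 p.2) ^ 3 * (wFun T ψ lam s v p.1 p.2) ^ 2) (QSub T 0 α') →
        s ^ 3 * (∫ p in QSub T 0 1, a p.2 * (pderivX (phiFun T ψ lam) p.1 p.2) * (pderivX (fun t x => a x * (pderivX (phiFun T ψ lam) t x) ^ 2) p.1 p.2) * (wFun T ψ lam s v p.1 p.2) ^ 2) ≥
          C * lam ^ 4 * s ^ 3 * (∫ p in QSub T 0 1, (a p.2) ^ 2 * |(deriv ψ p.2)| ^ 4 * (sigmaFun T ψ lam p.1 p.2) ^ 3 * (wFun T ψ lam s v p.1 p.2) ^ 2)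
          - C * s ^ 3 * lam ^ 3 * (∫ p in QSub T α' β', (sigmaFun T ψ lam p.1 p.2) ^ 3 * (wFun T ψ lam s v p.1 p.2) ^ 2)
          + C * s ^ 3 * lam ^ 3 * (∫ p in QSub T 0 α', (p.2 ^ 2 / a p.2) * (sigmaFun T ψ lam p.1 p.2) ^ 3 * (wFun T ψ lam s v p.1 p.2) ^ 2) := by
  obtain ⟨hK2, hKa⟩ : K < 2 ∧ ∀ x ∈ Ioc (0:ℝ) 1, x * a' x ≤ K * a x :=
    hK.elim (fun h => ⟨by linarith [h.2.1], h.2.2⟩) fun h => ⟨h.2.1, h.2.2.1⟩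
  have hα' : 0 < α' := hαw.trans hαα'
  have hβ' : β' < 1 := hβ'β.trans hβw
  obtain ⟨m, hm⟩ : BddBelow (weightKernel a a' ψ '' Icc α' β') :=
    isCompact_Icc.bddBelow_image <| (continuousOn_weightKernel ha (hψ.smooth.mono
      Ioo_subset_Icc_self)).mono fun y hy => ⟨hα'.trans_le hy.1, hy.2.trans_lt hβ'⟩
  have hα'a : 0 < a α' := ha.pos α' ⟨hα', (hα'β'.trans hβ').le⟩
  set C := min 1 (2 - K)
  have hC : 0 < C := lt_min one_pos (by linarith)
  obtain ⟨lam₀, hlam₀, hlam⟩ := exists_pos_forall_ge_le_mul (b₁ := m ^ 2) (b₂ := 2 * a 1)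
    (by positivity : 0 < 4 * C * a α' ^ 2) (pow_pos (hα'.trans hα'β') 2)
  refine ⟨C, hC, lam₀, hlam₀, fun lam hlam₀lam s _ h v _ _ _ hI0 hI1 hI2 hI3 => ?_⟩
  obtain ⟨hlamm, hlam1⟩ := hlam lam hlam₀lam
  have key := setIntegral_sub_add_le (measurableSet_QSub T α' β') (measurableSet_QSub T 0 α')
    (QSub_subset_QSub hα'.le hβ'.le) (QSub_subset_QSub le_rfl (hα'β'.trans hβ').le)
    (hI1.const_mul (C * lam ^ 4)) (hI2.const_mul (C * lam ^ 3)) (hI3.const_mul (C * lam ^ 3))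
    hI0 <| by
      filter_upwards [ae_restrict_mem (measurableSet_QSub T 0 1),
        ae_restrict_of_ae (ae_snd_ne α'), ae_restrict_of_ae (ae_snd_ne β')] with p hp hpα' hpβ'
      exact integrand_lower_bound ha hψ hKa hK2 hα' hα'β' hβ' (fun y hy => hm ⟨y, hy, rfl⟩) hC
        (min_le_left _ _) (min_le_right _ _) (hlam₀.le.trans hlam₀lam) hlamm hlam1 _ hp hpα' hpβ'
  simp only [integral_const_mul] at key
  linarith [mul_le_mul_of_nonneg_left key (by positivity : (0:ℝ) ≤ s ^ 3)]

theorem lower_bound_principal_zero_order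
    (T αw βw α' β' K : ℝ)
    (hT : 0 < T) (hαw : 0 < αw) (hαα' : αw < α') (hα'β' : α' < β')
    (hβ'β : β' < βw) (hβw : βw < 1)
    (a a' ψ : ℝ → ℝ)
    (ha : DegenCoeff a a')
    (hK : DegenWeak a a' K ∨ DegenStrong a a' K)
    (hψ : WeightPsi a α' β' ψ) :
    ∃ C > (0:ℝ), ∃ lam₀ > (0:ℝ), ∀ lam ≥ lam₀, ∀ s > (0:ℝ),
      ∀ h v : ℝ → ℝ → ℝ,
        IntegrableOn (fun p : ℝ × ℝ => h p.1 p.2 ^ 2) (QSub T 0 1) →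
        RegSol T a h v →
        (BdryWeak T v ∨ BdryStrong T a v) →
        IntegrableOn (fun p : ℝ × ℝ => a p.2 * (pderivX (phiFun T ψ lam) p.1 p.2) * (pderivX (fun t x => a x * (pderivX (phiFun T ψ lam) t x) ^ 2) p.1 p.2) * (wFun T ψ lam s v p.1 p.2) ^ 2) (QSub T 0 1) →
        IntegrableOn (fun p : ℝ × ℝ => (a p.2) ^ 2 * |(deriv ψ p.2)| ^ 4 * (sigmaFun T ψ lam p.1 p.2) ^ 3 * (wFun T ψ lam s v p.1 p.2) ^ 2) (QSub T 0 1) →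
        IntegrableOn (fun p : ℝ × ℝ => (sigmaFun T ψ lam p.1 p.2) ^ 3 * (wFun T ψ lam s v p.1 p.2) ^ 2) (QSub T α' β') →
        IntegrableOn (fun p : ℝ × ℝ => (p.2 ^ 2 / a p.2) * (sigmaFun T ψ lam p.1 p.2) ^ 3 * (wFun T ψ lam s v p.1 p.2) ^ 2) (QSub T 0 α') →
        s ^ 3 * (∫ p in QSub T 0 1, a p.2 * (pderivX (phiFun T ψ lam) p.1 p.2) * (pderivX (fun t x => a x * (pderivX (phiFun T ψ lam) t x) ^ 2) p.1 p.2) * (wFun T ψ lam s v p.1 p.2) ^ 2) ≥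
          C * lam ^ 4 * s ^ 3 * (∫ p in QSub T 0 1, (a p.2) ^ 2 * |(deriv ψ p.2)| ^ 4 * (sigmaFun T ψ lam p.1 p.2) ^ 3 * (wFun T ψ lam s v p.1 p.2) ^ 2)
          - C * s ^ 3 * lam ^ 3 * (∫ p in QSub T α' β', (sigmaFun T ψ lam p.1 p.2) ^ 3 * (wFun T ψ lam s v p.1 p.2) ^ 2)
          + C * s ^ 3 * lam ^ 3 * (∫ p in QSub T 0 α', (p.2 ^ 2 / a p.2) * (sigmaFun T ψ lam p.1 p.2) ^ 3 * (wFun T ψ lam s v p.1 p.2) ^ 2) :=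
  lower_bound_principal_zero_order_general T αw βw α' β' K hαw hαα' hα'β' hβ'β hβw a a' ψ ha hK hψ
end
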